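/- Let X, Z be finite nonempty types and Y a finite additive abelian group, let B ⊆ X be a subset, and let P : X → Y be a function with P x = 0 for all x ∉ B. Let O_P be the oracle unitary for P on H = EuclideanSpace ℂ (X × Y × Z), and let Π_B be the orthogonal projection onto the span of the standard basis vectors e_{(x,y,z)} with x ∈ B. Then for every vector φ ∈ H, ‖φ − O_P φ‖ ≤ 2·‖Π_B φ‖. -/

import Mathlib

/-!
Since `P` vanishes outside `B`, the oracle fixes `φ - Π_B φ`, so
`φ - O_P φ = Π_B φ - O_P (Π_B φ)`; as `O_P` permutes coordinates it is an isometry,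
and the triangle inequality gives the bound `2 ‖Π_B φ‖`.
-/

noncomputable section

/-- The oracle unitary for a function `P : X → Y`: the permutation unitary induced on
standard basis vectors by `(x, y, z) ↦ (x, y + P x, z)`. -/
def oracleOp {X Y Z : Type*} [Fintype X] [Fintype Y] [Fintype Z] [AddCommGroup Y]
    (P : X → Y) :
    EuclideanSpace ℂ (X × Y × Z) →L[ℂ] EuclideanSpace ℂ (X × Y × Z) :=
  LinearMap.toContinuousLinearMap
    { toFun := fun ψ => (WithLp.toLp 2 (fun p : X × Y × Z => ψ (p.1, p.2.1 - P p.1, p.2.2)) : EuclideanSpace ℂ (X × Y × Z))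
      map_add' := fun _ _ => rfl
      map_smul' := fun _ _ => rfl }

/-- `Π_B φ`: the orthogonal projection of `φ` onto the span of the standard basis vectors
`e_(x,w)` with `x ∈ B`. -/
def projVec {X W : Type*} (B : Set X) [DecidablePred (· ∈ B)]
    (φ : EuclideanSpace ℂ (X × W)) : EuclideanSpace ℂ (X × W) :=
  WithLp.toLp 2 (fun p : X × W => if p.1 ∈ B then φ p else 0)

section Oracle

variable {X Y Z : Type*} [Fintype X] [Fintype Y] [Fintype Z] [AddCommGroup Y]

@[simp]
theorem oracleOp_apply (P : X → Y) (ψ : EuclideanSpace ℂ (X × Y × Z)) (x : X) (y : Y) (z : Z) :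
    oracleOp P ψ (x, y, z) = ψ (x, y - P x, z) :=
  rfl

def oracleShift (P : X → Y) : X × Y × Z ≃ X × Y × Z where
  toFun p := (p.1, p.2.1 + P p.1, p.2.2)
  invFun p := (p.1, p.2.1 - P p.1, p.2.2)
  left_inv p := by simp
  right_inv p := by simp

theorem oracleOp_eq_piLpCongrLeft (P : X → Y) (ψ : EuclideanSpace ℂ (X × Y × Z)) :
    oracleOp P ψ = LinearIsometryEquiv.piLpCongrLeft 2 ℂ ℂ (oracleShift P) ψ := by
  ext ⟨x, y, z⟩
  simp [LinearIsometryEquiv.piLpCongrLeft_apply, oracleShift]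

@[simp]
theorem norm_oracleOp (P : X → Y) (ψ : EuclideanSpace ℂ (X × Y × Z)) :
    ‖oracleOp P ψ‖ = ‖ψ‖ := by
  rw [oracleOp_eq_piLpCongrLeft, LinearIsometryEquiv.norm_map]

theorem oracleOp_sub_projVec (B : Set X) [DecidablePred (· ∈ B)] (P : X → Y)
    (hP : ∀ x, x ∉ B → P x = 0) (φ : EuclideanSpace ℂ (X × Y × Z)) :
    oracleOp P (φ - projVec B φ) = φ - projVec B φ := by
  ext ⟨x, y, z⟩
  by_cases hx : x ∈ B
  · simp [projVec, hx]
  · simp [projVec, hx, hP x hx]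

end Oracle

theorem norm_sub_oracle_le_general
    {X Y Z : Type*} [Fintype X] [Fintype Z]
    [Fintype Y] [AddCommGroup Y]
    (B : Set X) [DecidablePred (· ∈ B)]
    (P : X → Y) (hP : ∀ x, x ∉ B → P x = 0)
    (φ : EuclideanSpace ℂ (X × Y × Z)) :
    ‖φ - oracleOp P φ‖ ≤ 2 * ‖projVec B φ‖ := by
  have hsplit : φ - oracleOp P φ = projVec B φ - oracleOp P (projVec B φ) := by
    rw [sub_eq_sub_iff_sub_eq_sub, ← map_sub]
    exact (oracleOp_sub_projVec B P hP φ).symm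
  calc ‖φ - oracleOp P φ‖
      = ‖projVec B φ - oracleOp P (projVec B φ)‖ := by rw [hsplit]
    _ ≤ ‖projVec B φ‖ + ‖oracleOp P (projVec B φ)‖ := norm_sub_le _ _
    _ = 2 * ‖projVec B φ‖ := by rw [norm_oracleOp]; ring

/-- If `P : X → Y` vanishes outside `B`, then for every vector `φ`,
`‖φ - O_P φ‖ ≤ 2 ‖Π_B φ‖`. -/
theorem norm_sub_oracle_le
    {X Y Z : Type*} [Fintype X] [Nonempty X] [Fintype Z] [Nonempty Z]
    [Fintype Y] [AddCommGroup Y]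
    (B : Set X) [DecidablePred (· ∈ B)]
    (P : X → Y) (hP : ∀ x, x ∉ B → P x = 0)
    (φ : EuclideanSpace ℂ (X × Y × Z)) :
    ‖φ - oracleOp P φ‖ ≤ 2 * ‖projVec B φ‖ :=
  norm_sub_oracle_le_general B P hP φ

end
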